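/- Let P be a probability measure on ℝ^d, τ ∈ [0,1), and u ∈ S^{d−1}. Then the objective O(z) = E[‖z − X‖ − ‖X‖] − τ⟨u, z⟩ is coercive: O(z) → ∞ as ‖z‖ → ∞; consequently a minimizer (a geometric quantile of order τ in direction u) exists. -/

import Mathlib

/-!
Since `|‖z - x‖ - ‖x‖| ≤ ‖z‖`, the objective is finite and `1`-Lipschitz in `z` up to the linear
term. For coercivity, pick `R` with `P(‖X‖ > R) = p` small: on `‖x‖ ≤ R` the integrand is at least
`‖z‖ - 2R`, and elsewhere at least `-‖z‖`, so `E[‖z - X‖ - ‖X‖] ≥ (1 - 2p)‖z‖ - 2R`. Subtracting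
`τ⟨u, z⟩ ≤ τ‖z‖` leaves a lower bound growing like `(1 - τ - 2p)‖z‖`, and `1 - τ - 2p > 0` once
`p < (1 - τ)/2`. A continuous coercive function attains its minimum.
-/

open MeasureTheory Filter Topology

section CenteredMeanDist

variable {E : Type*} [NormedAddCommGroup E]

lemma abs_norm_sub_sub_norm_le (z x : E) : |‖z - x‖ - ‖x‖| ≤ ‖z‖ := by
  simpa using abs_norm_sub_norm_le (z - x) (-x)

lemma sub_indicator_le_norm_sub_sub_norm {R : ℝ} (hR : 0 ≤ R) (z x : E) :
    ‖z‖ - 2 * R - 2 * {x : E | R < ‖x‖}.indicator (fun _ ↦ ‖z‖) x ≤ ‖z - x‖ - ‖x‖ := by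
  have hlow := abs_le.mp (abs_norm_sub_sub_norm_le z x)
  by_cases hx : x ∈ {x : E | R < ‖x‖}
  · rw [Set.indicator_of_mem hx]
    linarith
  · rw [Set.indicator_of_notMem hx]
    linarith [norm_sub_norm_le z x, (not_lt.mp hx : ‖x‖ ≤ R)]

variable [MeasurableSpace E] [OpensMeasurableSpace E] (μ : Measure E)

lemma integrable_norm_sub_sub_norm [IsFiniteMeasure μ] (z : E) :
    Integrable (fun x ↦ ‖z - x‖ - ‖x‖) μ :=
  (integrable_const ‖z‖).mono'
    ((continuous_const.sub continuous_id).norm.sub continuous_norm).aestronglyMeasurable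
    (.of_forall (abs_norm_sub_sub_norm_le z))

/-- Recentring `E‖z - X‖` by `‖X‖` makes it finite without any moment assumption on `μ`. -/
noncomputable def centeredMeanDist (z : E) : ℝ := ∫ x, (‖z - x‖ - ‖x‖) ∂μ

lemma lipschitzWith_centeredMeanDist [IsProbabilityMeasure μ] :
    LipschitzWith 1 (centeredMeanDist μ) := by
  refine LipschitzWith.of_dist_le_mul fun z w ↦ ?_
  have hdiff : centeredMeanDist μ z - centeredMeanDist μ w = ∫ x, (‖z - x‖ - ‖w - x‖) ∂μ := by
    rw [centeredMeanDist, centeredMeanDist,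
      ← integral_sub (integrable_norm_sub_sub_norm μ z) (integrable_norm_sub_sub_norm μ w)]
    simp only [sub_sub_sub_cancel_right]
  have hbound : ∀ x, ‖‖z - x‖ - ‖w - x‖‖ ≤ ‖z - w‖ := fun x ↦ by
    simpa using abs_norm_sub_norm_le (z - x) (w - x)
  simpa [Real.dist_eq, dist_eq_norm, hdiff] using
    norm_integral_le_of_norm_le_const (μ := μ) (.of_forall hbound)

lemma tendsto_measureReal_norm_gt_atTop [IsFiniteMeasure μ] :
    Tendsto (fun r : ℝ ↦ μ.real {x | r < ‖x‖}) atTop (𝓝 0) := by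
  have hanti : Antitone fun r : ℝ ↦ {x : E | r < ‖x‖} :=
    fun r s hrs x hx ↦ lt_of_le_of_lt hrs hx
  have hempty : ⋂ r : ℝ, {x : E | r < ‖x‖} = ∅ :=
    Set.eq_empty_of_forall_notMem fun x hx ↦ lt_irrefl ‖x‖ (Set.mem_iInter.mp hx ‖x‖)
  have h := tendsto_measure_iInter_atTop (μ := μ)
    (fun r ↦ (measurableSet_lt measurable_const measurable_norm).nullMeasurableSet) hanti
    ⟨0, measure_ne_top μ _⟩
  rw [hempty, measure_empty] at h
  exact (ENNReal.tendsto_toReal ENNReal.zero_ne_top).comp h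

lemma le_centeredMeanDist [IsProbabilityMeasure μ] {R : ℝ} (hR : 0 ≤ R) (z : E) :
    (1 - 2 * μ.real {x | R < ‖x‖}) * ‖z‖ - 2 * R ≤ centeredMeanDist μ z := by
  have hS : MeasurableSet {x : E | R < ‖x‖} := measurableSet_lt measurable_const measurable_norm
  have hind : Integrable ({x : E | R < ‖x‖}.indicator fun _ ↦ ‖z‖) μ :=
    (integrable_const _).indicator hS
  calc (1 - 2 * μ.real {x | R < ‖x‖}) * ‖z‖ - 2 * R
      = ∫ x, (‖z‖ - 2 * R - 2 * {x : E | R < ‖x‖}.indicator (fun _ ↦ ‖z‖) x) ∂μ := by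
        rw [integral_sub (integrable_const _) (hind.const_mul 2), integral_const_mul,
          integral_indicator_const _ hS]
        simp only [integral_const, probReal_univ, smul_eq_mul]
        ring
    _ ≤ centeredMeanDist μ z :=
        integral_mono ((integrable_const _).sub (hind.const_mul 2))
          (integrable_norm_sub_sub_norm μ z) (sub_indicator_le_norm_sub_sub_norm hR z)

theorem tendsto_centeredMeanDist_sub_cobounded [IsProbabilityMeasure μ] {ℓ : E → ℝ} {c : ℝ}
    (hℓ : ∀ z, ℓ z ≤ c * ‖z‖) (hc : c < 1) :
    Tendsto (fun z ↦ centeredMeanDist μ z - ℓ z) (Bornology.cobounded E) atTop := by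
  obtain ⟨R, hsmall, hR⟩ := (((tendsto_measureReal_norm_gt_atTop μ).eventually
    (gt_mem_nhds (by linarith : (0 : ℝ) < (1 - c) / 4))).and (eventually_ge_atTop 0)).exists
  have hlow : ∀ z, (1 - c - 2 * μ.real {x | R < ‖x‖}) * ‖z‖ - 2 * R ≤
      centeredMeanDist μ z - ℓ z := fun z ↦ by
    linarith [le_centeredMeanDist μ hR z, hℓ z]
  refine tendsto_atTop_mono hlow (tendsto_atTop_add_const_right _ _ ?_)
  exact tendsto_norm_cobounded_atTop.const_mul_atTop (by linarith)

end CenteredMeanDist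

theorem geometric_quantile_objective_coercive (d : ℕ)
    (P : Measure (EuclideanSpace ℝ (Fin d))) [IsProbabilityMeasure P]
    (τ : ℝ) (hτ : τ ∈ Set.Ico (0 : ℝ) 1)
    (u : EuclideanSpace ℝ (Fin d)) (hu : ‖u‖ = 1)
    (O : EuclideanSpace ℝ (Fin d) → ℝ)
    (hO : ∀ z, O z = (∫ x, (‖z - x‖ - ‖x‖) ∂P) - τ * inner ℝ u z) :
    Tendsto O (cocompact (EuclideanSpace ℝ (Fin d))) atTop ∧
    ∃ z₀, ∀ z, O z₀ ≤ O z := by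
  have hO' : O = fun z ↦ centeredMeanDist P z - τ * inner ℝ u z := funext hO
  have hlinear : ∀ z, τ * inner ℝ u z ≤ τ * ‖z‖ := fun z ↦ by
    simpa [hu] using mul_le_mul_of_nonneg_left (real_inner_le_norm u z) hτ.1
  have hcoercive : Tendsto O (cocompact _) atTop := by
    rw [← Metric.cobounded_eq_cocompact, hO']
    exact tendsto_centeredMeanDist_sub_cobounded P hlinear hτ.2
  have hcont : Continuous O := by
    rw [hO']
    exact (lipschitzWith_centeredMeanDist P).continuous.sub
      (continuous_const.mul (continuous_const.inner continuous_id))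
  exact ⟨hcoercive, hcont.exists_forall_le hcoercive⟩
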